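/- For every integer t ≥ 3, the polynomial t·x² is a Hilbert polynomial. -/

import Mathlib

open Polynomial

/-- A polynomial `f ∈ ℚ[x]` is a *Hilbert polynomial* if there exist a field `k`,
a standard graded `k`-algebra `R` (a commutative `ℕ`-graded `k`-algebra with
finite-dimensional graded pieces, generated as a `k`-algebra by its degree-one part)
and an `N₀` such that `dim_k R_i = f(i)` for all `i ≥ N₀`. -/
def IsHilbertPolynomial (f : Polynomial ℚ) : Prop :=
  ∃ (k : Type) (R : Type) (_ : Field k) (_ : CommRing R) (_ : Algebra k R)
    (𝒜 : ℕ → Submodule k R) (_ : GradedAlgebra 𝒜),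
    (∀ i : ℕ, FiniteDimensional k (𝒜 i)) ∧
    Algebra.adjoin k ((𝒜 1 : Submodule k R) : Set R) = ⊤ ∧
    ∃ N₀ : ℕ, ∀ i : ℕ, N₀ ≤ i → (Module.finrank k (𝒜 i) : ℚ) = f.eval (i : ℚ)

/-!
Let `S` be a lower set of monomials in finitely many variables and identify all monomials
outside `S` that have the same degree. This is a congruence, so the quotient is a graded monoid
generated in degree one; its monoid algebra is standard graded, and its degree-`i` part has
dimension `#{m ∈ S | deg m = i} + 1` once some monomial of degree `i` lies outside `S`.

In the variables `x, y, z, u, w, τ` take for `S` the monomials in `x, y, z, u` with `u`-exponent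
at most `n`, the `x^a y^b w^e` with `1 ≤ e ≤ B` and the `x^a τ^f` with `1 ≤ f ≤ V`. For large `i`
this gives `C(i+3,3) - C(i+2-n,3) + (B i - C(B,2)) + V` monomials of degree `i`. With `n = 2t - 1`
the leading term is `t i²`, `B = 2t(t-2)` cancels the linear term and
`V = C(B,2) - C(2t-1,3) - 2` the constant term; `V ≥ 0` is where `t ≥ 3` is needed.
-/

namespace AddMonoidAlgebra

variable {k M ι : Type*}

theorem gradeBy_eq_supported [CommSemiring k] (f : M → ι) (i : ι) :
    gradeBy k f i = supported k k (f ⁻¹' {i}) := by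
  ext a
  rw [mem_gradeBy_iff, mem_supported]

theorem finite_gradeBy [Field k] {f : M → ι} {i : ι} (h : (f ⁻¹' {i}).Finite) :
    Module.Finite k (gradeBy k f i) := by
  have := h.to_subtype
  rw [gradeBy_eq_supported]
  exact Module.Finite.equiv (supportedEquivFinsupp _).symm

theorem finrank_gradeBy [Field k] {f : M → ι} {i : ι} (h : (f ⁻¹' {i}).Finite) :
    Module.finrank k (gradeBy k f i) = (f ⁻¹' {i}).ncard := by
  have := h.fintype
  rw [gradeBy_eq_supported, (supportedEquivFinsupp _).finrank_eq, Module.finrank_finsupp_self,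
    Set.ncard_eq_toFinset_card', Set.toFinset_card]

theorem adjoin_gradeBy_one_eq_top [CommSemiring k] [AddCommMonoid M] (deg : M →+ ℕ)
    (h : AddSubmonoid.closure (deg ⁻¹' {1}) = ⊤) :
    Algebra.adjoin k (gradeBy k deg 1 : Set k[M]) = ⊤ := by
  refine eq_top_iff.2 fun x _ => ?_
  obtain ⟨p, rfl⟩ := mvPolynomial_aeval_of_surjective_of_closure (R := k) h x
  have hp := AlgHom.mem_range_self (MvPolynomial.aeval fun s : deg ⁻¹' {1} => of' k M s) p
  rw [MvPolynomial.aeval_range] at hp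
  refine Algebra.adjoin_mono ?_ hp
  rintro _ ⟨⟨m, hm⟩, rfl⟩
  have := single_mem_gradeBy (R := k) deg m 1
  rwa [show deg m = 1 from hm] at this

end AddMonoidAlgebra

open AddMonoidAlgebra in
theorem isHilbertPolynomial_of_ncard_preimage {M : Type} [AddCommMonoid M] (deg : M →+ ℕ)
    (hgen : AddSubmonoid.closure (deg ⁻¹' {1}) = ⊤) (hfin : ∀ i, (deg ⁻¹' {i}).Finite)
    (f : ℚ[X]) (N₀ : ℕ) (hf : ∀ i, N₀ ≤ i → ((deg ⁻¹' {i}).ncard : ℚ) = f.eval (i : ℚ)) :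
    IsHilbertPolynomial f :=
  ⟨ℚ, ℚ[M], _, _, _, gradeBy ℚ deg, gradeBy.gradedAlgebra deg,
    fun i => finite_gradeBy (hfin i), adjoin_gradeBy_one_eq_top deg hgen,
    N₀, fun i hi => by rw [finrank_gradeBy (hfin i), hf i hi]⟩

namespace Finsupp

section Absorb

variable {σ : Type*} (S : LowerSet (σ →₀ ℕ))

def absorbCon : AddCon (σ →₀ ℕ) where
  r a b := a = b ∨ (a ∉ S ∧ b ∉ S ∧ a.degree = b.degree)
  iseqv := by
    refine ⟨fun a => .inl rfl, ?_, ?_⟩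
    · rintro a b (rfl | ⟨ha, hb, h⟩)
      exacts [.inl rfl, .inr ⟨hb, ha, h.symm⟩]
    · rintro a b c (rfl | ⟨ha, hb, hab⟩) (rfl | ⟨hb', hc, hbc⟩)
      exacts [.inl rfl, .inr ⟨hb', hc, hbc⟩, .inr ⟨ha, hb, hab⟩, .inr ⟨ha, hc, hab.trans hbc⟩]
  add' := by
    have out {a b : σ →₀ ℕ} (ha : a ∉ S) : a + b ∉ S := fun h => ha (S.lower le_self_add h)
    have out' {a b : σ →₀ ℕ} (hb : b ∉ S) : a + b ∉ S := fun h => hb (S.lower le_add_self h)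
    rintro a b c d (rfl | ⟨ha, hb, hab⟩) (rfl | ⟨hc, hd, hcd⟩)
    · exact .inl rfl
    · exact .inr ⟨out' hc, out' hd, by simp [hcd]⟩
    · exact .inr ⟨out ha, out hb, by simp [hab]⟩
    · exact .inr ⟨out ha, out hb, by simp [hab, hcd]⟩

noncomputable def absorbDegree : (absorbCon S).Quotient →+ ℕ :=
  (absorbCon S).lift degree <| by
    rintro a b (rfl | ⟨-, -, h⟩)
    exacts [rfl, h]

@[simp]
theorem absorbDegree_coe (a : σ →₀ ℕ) : absorbDegree S a = a.degree := rfl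

theorem closure_absorbDegree_preimage_one :
    AddSubmonoid.closure (absorbDegree S ⁻¹' {1}) = ⊤ := by
  refine (AddSubmonoid.eq_top_iff' _).2 fun m => ?_
  induction m using AddCon.induction_on with | H a => ?_
  induction a using Finsupp.induction with
  | zero => exact zero_mem _
  | single_add j n a _ _ ih =>
    rw [AddCon.coe_add]
    refine add_mem ?_ ih
    have : ((single j n : σ →₀ ℕ) : (absorbCon S).Quotient) = ((n • single j 1 : σ →₀ ℕ) : _) := by
      rw [smul_single, smul_eq_mul, mul_one]
    rw [this]
    exact nsmul_mem (x := ((single j 1 : σ →₀ ℕ) : (absorbCon S).Quotient))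
      (AddSubmonoid.subset_closure (by simp)) n

theorem absorbDegree_preimage_eq_image (i : ℕ) :
    absorbDegree S ⁻¹' {i} = (↑) '' {a : σ →₀ ℕ | a.degree = i} := by
  ext m
  induction m using AddCon.induction_on with | H a => ?_
  constructor
  · exact fun h => ⟨a, h, rfl⟩
  · rintro ⟨b, hb, hba⟩
    rw [Set.mem_preimage, ← hba, absorbDegree_coe, hb, Set.mem_singleton_iff]

theorem finite_absorbDegree_preimage [Finite σ] (i : ℕ) : (absorbDegree S ⁻¹' {i}).Finite := by
  rw [absorbDegree_preimage_eq_image]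
  exact (finite_of_degree_eq i).image _

theorem absorbDegree_preimage_eq_insert {b : σ →₀ ℕ} (hb : b ∉ S) :
    absorbDegree S ⁻¹' {b.degree} =
      insert ↑b ((↑) '' ((S : Set (σ →₀ ℕ)) ∩ {a | a.degree = b.degree})) := by
  rw [absorbDegree_preimage_eq_image]
  ext m
  constructor
  · rintro ⟨a, ha, rfl⟩
    by_cases haS : a ∈ S
    · exact .inr ⟨a, ⟨haS, ha⟩, rfl⟩
    · exact .inl ((absorbCon S).eq.2 (.inr ⟨haS, hb, ha⟩))
  · rintro (rfl | ⟨a, ⟨-, ha⟩, rfl⟩)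
    exacts [⟨b, rfl, rfl⟩, ⟨a, ha, rfl⟩]

theorem ncard_absorbDegree_preimage [Finite σ] {b : σ →₀ ℕ} (hb : b ∉ S) :
    (absorbDegree S ⁻¹' {b.degree}).ncard =
      ((S : Set (σ →₀ ℕ)) ∩ {a | a.degree = b.degree}).ncard + 1 := by
  have hinj : Set.InjOn (fun a : σ →₀ ℕ => (a : (absorbCon S).Quotient)) (S : Set _) := by
    intro a ha a' ha' h
    rcases (absorbCon S).eq.1 h with h | ⟨h, -⟩
    exacts [h, absurd ha h]
  have hfin : ((S : Set (σ →₀ ℕ)) ∩ {a | a.degree = b.degree}).Finite :=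
    (finite_of_degree_eq _).subset Set.inter_subset_right
  rw [absorbDegree_preimage_eq_insert S hb, Set.ncard_insert_of_notMem ?_ (hfin.image _),
    (hinj.mono Set.inter_subset_left).ncard_image]
  rintro ⟨a, ⟨ha, -⟩, hab⟩
  rcases (absorbCon S).eq.1 hab with rfl | ⟨h, -⟩
  exacts [hb ha, h ha]

end Absorb

section Cylinder

variable {σ : Type*} [DecidableEq σ]

def cylinder (F : Finset σ) (v : σ) (E : Finset ℕ) : Set (σ →₀ ℕ) :=
  {a | a.support ⊆ insert v F ∧ a v ∈ E}

variable {F F' : Finset σ} {v v' : σ} {E E' : Finset ℕ} {a b : σ →₀ ℕ}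

theorem cylinder_inter_degree_eq_image (hv : v ∉ F) {i : ℕ} (hE : ∀ e ∈ E, e ≤ i) :
    cylinder F v E ∩ {a | a.degree = i} =
      ((E.sigma fun e => F.finsuppAntidiag (i - e)).image fun p => p.2 + single v p.1 :) := by
  ext a
  simp only [cylinder, Set.mem_inter_iff, Set.mem_ofPred_eq, Finset.coe_image, Set.mem_image,
    Finset.mem_coe, Finset.mem_sigma, Finset.mem_finsuppAntidiag', Sigma.exists]
  constructor
  · rintro ⟨⟨hsupp, hav⟩, rfl⟩
    refine ⟨a v, a.erase v, ⟨hav, ?_, ?_⟩, erase_add_single v a⟩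
    · have := congrArg degree (erase_add_single v a)
      rw [map_add, degree_single] at this
      exact Nat.eq_sub_of_add_eq this
    · rwa [support_erase, ← Finset.subset_insert_iff]
  · rintro ⟨e, f, ⟨he, hf, hfF⟩, rfl⟩
    have hfv : f v = 0 := notMem_support_iff.1 fun h => hv (hfF h)
    refine ⟨⟨support_add.trans ?_, by simp [hfv, he]⟩, ?_⟩
    · exact Finset.union_subset (hfF.trans (Finset.subset_insert _ _))
        (support_single_subset.trans (by simp))
    · rw [map_add, degree_single, show f.degree = i - e from hf, Nat.sub_add_cancel (hE e he)]

theorem ncard_cylinder_inter_degree (hv : v ∉ F) {i : ℕ} (hE : ∀ e ∈ E, e ≤ i) :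
    (cylinder F v E ∩ {a | a.degree = i}).ncard = ∑ e ∈ E, F.card.multichoose (i - e) := by
  rw [cylinder_inter_degree_eq_image hv hE, Set.ncard_coe_finset, Finset.card_image_of_injOn,
    Finset.card_sigma]
  · simp only [Finset.card_finsuppAntidiag_nat_eq_multichoose]
  rintro ⟨e, f⟩ hf ⟨e', f'⟩ hf' h
  simp only [Finset.coe_sigma, Set.mem_sigma_iff, Finset.mem_coe,
    Finset.mem_finsuppAntidiag'] at hf hf' h
  have hfv : f v = 0 := notMem_support_iff.1 fun h => hv (hf.2.2 h)
  have hfv' : f' v = 0 := notMem_support_iff.1 fun h => hv (hf'.2.2 h)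
  obtain rfl : e = e' := by simpa [hfv, hfv'] using DFunLike.congr_fun h v
  rw [add_left_inj] at h
  rw [h]

theorem mem_cylinder_of_le (hba : b ≤ a) (ha : a ∈ cylinder F v E) (hb : b v ∈ E) :
    b ∈ cylinder F v E :=
  ⟨(support_mono hba).trans ha.1, hb⟩

theorem mem_cylinder_of_support_subset (hb : b.support ⊆ F) (hv : v ∉ F) (h0 : 0 ∈ E) :
    b ∈ cylinder F v E :=
  ⟨hb.trans (Finset.subset_insert _ _), by rwa [notMem_support_iff.1 fun h => hv (hb h)]⟩

theorem mem_cylinder_Icc_or_support_subset {m : ℕ} (hba : b ≤ a)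
    (ha : a ∈ cylinder F v (Finset.Icc 1 m)) :
    b ∈ cylinder F v (Finset.Icc 1 m) ∨ b.support ⊆ F := by
  by_cases hbv : b v = 0
  · refine .inr fun j hj => ?_
    refine (Finset.mem_insert.1 ((support_mono hba).trans ha.1 hj)).resolve_left ?_
    rintro rfl
    exact mem_support_iff.1 hj hbv
  · refine .inl (mem_cylinder_of_le hba ha ?_)
    have := Finset.mem_Icc.1 ha.2
    have := hba v
    simp only [Finset.mem_Icc]
    omega

theorem disjoint_cylinder (h0 : 0 ∉ E) (hv : v ∉ insert v' F') :
    Disjoint (cylinder F v E) (cylinder F' v' E') := by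
  refine Set.disjoint_left.2 fun a ha ha' => hv (ha'.1 ?_)
  rw [mem_support_iff]
  exact fun h => h0 (h ▸ ha.2)

end Cylinder

end Finsupp

theorem isHilbertPolynomial_of_lowerSet {σ : Type} [Finite σ] (S : LowerSet (σ →₀ ℕ))
    (f : ℚ[X]) (N₀ : ℕ)
    (hf : ∀ i, N₀ ≤ i → ∃ b ∉ S, b.degree = i ∧
      ((((S : Set (σ →₀ ℕ)) ∩ {a | a.degree = i}).ncard + 1 : ℕ) : ℚ) = f.eval (i : ℚ)) :
    IsHilbertPolynomial f := by
  refine isHilbertPolynomial_of_ncard_preimage (Finsupp.absorbDegree S)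
    (Finsupp.closure_absorbDegree_preimage_one S) (Finsupp.finite_absorbDegree_preimage S) f N₀
    fun i hi => ?_
  obtain ⟨b, hb, rfl, h⟩ := hf i hi
  rwa [Finsupp.ncard_absorbDegree_preimage S hb]

theorem Nat.cast_multichoose_three {K : Type*} [Field K] [CharZero K] (m : ℕ) :
    (Nat.multichoose 3 m : K) = (m + 1) * (m + 2) / 2 := by
  rw [Nat.multichoose_eq, show 3 + m - 1 = m + 2 by omega, Nat.choose_symm_add,
    Nat.cast_choose_two]
  push_cast
  ring

theorem Finset.sum_range_triangular (x : ℚ) (m : ℕ) :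
    ∑ u ∈ range m, (x - u + 1) * (x - u + 2) / 2 =
      ((x + 1) * (x + 2) * (x + 3) - (x + 1 - m) * (x + 2 - m) * (x + 3 - m)) / 6 := by
  induction m with
  | zero => simp
  | succ m ih =>
    rw [sum_range_succ, ih]
    push_cast
    ring

theorem Finset.sum_Icc_sub_add_one (x : ℚ) (m : ℕ) :
    ∑ w ∈ Icc 1 m, (x - w + 1) = m * (x + 1) - m * (m + 1) / 2 := by
  induction m with
  | zero => simp
  | succ m ih =>
    rw [sum_Icc_succ_top (by omega), ih]
    push_cast
    ring

section Staircase

open Finsupp Finset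

/-- The variables `0, …, 5` stand for `x, y, z, u, w, τ`. -/
def staircase (n B V : ℕ) : LowerSet (Fin 6 →₀ ℕ) where
  carrier := cylinder {0, 1, 2} 3 (range (n + 1)) ∪ cylinder {0, 1} 4 (Icc 1 B) ∪
    cylinder {0} 5 (Icc 1 V)
  lower' := by
    have low {b : Fin 6 →₀ ℕ} {F : Finset (Fin 6)} (hF : F ⊆ {0, 1, 2}) (hb : b.support ⊆ F) :
        b ∈ cylinder {0, 1, 2} 3 (range (n + 1)) :=
      mem_cylinder_of_support_subset (hb.trans hF) (by decide) (by simp)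
    rintro a b hba ((ha | ha) | ha)
    · refine .inl (.inl (mem_cylinder_of_le hba ha ?_))
      exact mem_range.2 ((hba 3).trans_lt (mem_range.1 ha.2))
    · rcases mem_cylinder_Icc_or_support_subset hba ha with hb | hb
      exacts [.inl (.inr hb), .inl (.inl (low (by decide) hb))]
    · rcases mem_cylinder_Icc_or_support_subset hba ha with hb | hb
      exacts [.inr hb, .inl (.inl (low (by decide) hb))]

theorem ncard_staircase_inter_degree {n B V i : ℕ} (hi : n + B + V ≤ i) :
    ((staircase n B V : Set (Fin 6 →₀ ℕ)) ∩ {a | a.degree = i}).ncard =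
      ∑ u ∈ range (n + 1), Nat.multichoose 3 (i - u) + ∑ w ∈ Icc 1 B, Nat.multichoose 2 (i - w) +
        ∑ t ∈ Icc 1 V, Nat.multichoose 1 (i - t) := by
  have hfin (C : Set (Fin 6 →₀ ℕ)) : (C ∩ {a | a.degree = i}).Finite :=
    (finite_of_degree_eq i).subset Set.inter_subset_right
  have disj {C C' : Set (Fin 6 →₀ ℕ)} (h : Disjoint C C') :
      Disjoint (C ∩ {a | a.degree = i}) (C' ∩ {a | a.degree = i}) :=
    h.mono Set.inter_subset_left Set.inter_subset_left
  have d12 : Disjoint (cylinder (σ := Fin 6) {0, 1, 2} 3 (range (n + 1)))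
      (cylinder {0, 1} 4 (Icc 1 B)) :=
    (disjoint_cylinder (by simp) (by decide)).symm
  have d13 : Disjoint (cylinder (σ := Fin 6) {0, 1, 2} 3 (range (n + 1)))
      (cylinder {0} 5 (Icc 1 V)) :=
    (disjoint_cylinder (by simp) (by decide)).symm
  have d23 : Disjoint (cylinder (σ := Fin 6) {0, 1} 4 (Icc 1 B)) (cylinder {0} 5 (Icc 1 V)) :=
    (disjoint_cylinder (by simp) (by decide)).symm
  have hE {E : Finset ℕ} (hE : ∀ e ∈ E, e ≤ n + B + V) : ∀ e ∈ E, e ≤ i :=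
    fun e he => (hE e he).trans hi
  change Set.ncard ((_ ∪ _ ∪ _) ∩ _) = _
  rw [Set.union_inter_distrib_right, Set.union_inter_distrib_right,
    Set.ncard_union_eq ((disj d13).union_left (disj d23)) ((hfin _).union (hfin _)) (hfin _),
    Set.ncard_union_eq (disj d12) (hfin _) (hfin _),
    ncard_cylinder_inter_degree (by decide) (hE ?_),
    ncard_cylinder_inter_degree (by decide) (hE ?_),
    ncard_cylinder_inter_degree (by decide) (hE ?_)]
  · rfl
  all_goals intro e he; simp only [mem_Icc, mem_range] at he; omega

theorem cast_ncard_staircase_inter_degree {n B V i : ℕ} (hi : n + B + V ≤ i) :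
    (((staircase n B V : Set (Fin 6 →₀ ℕ)) ∩ {a | a.degree = i}).ncard : ℚ) =
      ((i + 1) * (i + 2) * (i + 3) - (i - n) * (i + 1 - n) * (i + 2 - n)) / 6 +
        B * (i + 1) - B * (B + 1) / 2 + V := by
  rw [ncard_staircase_inter_degree hi]
  push_cast
  have h1 : ∑ u ∈ range (n + 1), (Nat.multichoose 3 (i - u) : ℚ) =
      ∑ u ∈ range (n + 1), ((i : ℚ) - u + 1) * (i - u + 2) / 2 := by
    refine sum_congr rfl fun u hu => ?_
    rw [Nat.cast_multichoose_three, Nat.cast_sub (by simp at hu; omega)]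
  have h2 : ∑ w ∈ Icc 1 B, (Nat.multichoose 2 (i - w) : ℚ) =
      ∑ w ∈ Icc 1 B, ((i : ℚ) - w + 1) := by
    refine sum_congr rfl fun w hw => ?_
    rw [Nat.multichoose_two, Nat.cast_add, Nat.cast_sub (by simp at hw; omega), Nat.cast_one]
  rw [h1, h2, sum_range_triangular, sum_Icc_sub_add_one]
  simp only [Nat.multichoose_one, sum_const, Nat.card_Icc, add_tsub_cancel_right, nsmul_eq_mul]
  push_cast
  ring

theorem isHilbertPolynomial_staircase (n B V : ℕ) (f : ℚ[X])
    (hf : ∀ x : ℚ, f.eval x =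
      ((x + 1) * (x + 2) * (x + 3) - (x - n) * (x + 1 - n) * (x + 2 - n)) / 6 +
        B * (x + 1) - B * (B + 1) / 2 + V + 1) :
    IsHilbertPolynomial f := by
  refine isHilbertPolynomial_of_lowerSet (staircase n B V) f (n + B + V + 1) fun i hi =>
    ⟨single 3 i, ?_, degree_single _ _, ?_⟩
  · rintro ((h | h) | h) <;> simp [cylinder] at h
    omega
  · push_cast
    rw [cast_ncard_staircase_inter_degree (by omega), hf]

end Staircase

theorem exists_natCast_eq_choose_two_sub_choose_three (s : ℕ) :
    ∃ V : ℕ, (V : ℚ) = (2 * s ^ 2 + 8 * s + 6) * (2 * s ^ 2 + 8 * s + 5) / 2 -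
      (2 * s + 5) * (2 * s + 4) * (2 * s + 3) / 6 - 2 := by
  have h2 : ((2 * s ^ 2 + 8 * s + 6).choose 2 : ℚ) =
      (2 * s ^ 2 + 8 * s + 6) * (2 * s ^ 2 + 8 * s + 5) / 2 := by
    rw [Nat.cast_choose_two]
    push_cast
    ring
  have h3 : ((2 * s + 5).choose 3 : ℚ) = (2 * s + 5) * (2 * s + 4) * (2 * s + 3) / 6 := by
    have h := congrArg (Nat.cast : ℕ → ℚ) (Nat.add_one_mul_choose_eq (2 * s + 4) 2)
    push_cast [Nat.cast_choose_two] at h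
    linear_combination -h / 3
  have hle : (2 * s + 5).choose 3 + 2 ≤ (2 * s ^ 2 + 8 * s + 6).choose 2 := by
    have : ((2 * s + 5).choose 3 + 2 : ℚ) ≤ (2 * s ^ 2 + 8 * s + 6).choose 2 := by
      rw [h2, h3, ← sub_nonneg]
      ring_nf
      positivity
    exact_mod_cast this
  refine ⟨(2 * s ^ 2 + 8 * s + 6).choose 2 - ((2 * s + 5).choose 3 + 2), ?_⟩
  rw [Nat.cast_sub hle]
  push_cast
  rw [h2, h3]
  ring

theorem sign_patterns_stmt5 (t : ℤ) (ht : 3 ≤ t) :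
    IsHilbertPolynomial (Polynomial.C (t : ℚ) * Polynomial.X ^ 2) := by
  obtain ⟨s, rfl⟩ : ∃ s : ℕ, t = s + 3 := ⟨(t - 3).toNat, by omega⟩
  obtain ⟨V, hV⟩ := exists_natCast_eq_choose_two_sub_choose_three s
  refine isHilbertPolynomial_staircase (2 * s + 5) (2 * s ^ 2 + 8 * s + 6) V _ fun x => ?_
  rw [eval_mul, eval_C, eval_pow, eval_X, hV]
  push_cast
  ring
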